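/- arXiv:1901.06760 — 2 statements merged into one kernel-verified Lean document; each statement's English description precedes it below -/
import Mathlib

section
/- Let G be a group and φ₁, φ₂ automorphisms of G. Then φ₁ and φ₂ are conjugate in Out(G) (i.e. there exist an automorphism β of G and an element x ∈ G with β ∘ φ₁ ∘ β⁻¹ = ad_x ∘ φ₂) if and only if there exists a group isomorphism ι : G ⋊_{φ₁} ℤ → G ⋊_{φ₂} ℤ such that ι maps the subgroup G × {0} onto G × {0} and ι maps the element t₁ = (1, 1) into the coset t₂ · (G × {0}), where t₂ = (1, 1) in G ⋊_{φ₂} ℤ. -/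
open SemidirectProduct Multiplicative

private lemma conj_aut {G : Type*} [Group G] (ψ : MulAut G) (a : G) :
    MulAut.conj (ψ a) = ψ * MulAut.conj a * ψ⁻¹ := by
  ext g
  simp [MulAut.conj_apply, MulAut.mul_apply, map_mul, map_inv]

private def theta {G : Type*} [Group G] (φ : MulAut G) :
    (G ⋊[zpowersHom (MulAut G) φ] Multiplicative ℤ) →* MulAut G :=
  SemidirectProduct.lift MulAut.conj (zpowersHom (MulAut G) φ) (by
    intro n
    refine MonoidHom.ext fun a => ?_
    simp only [MonoidHom.comp_apply, MulEquiv.coe_toMonoidHom, MulAut.conj_apply]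
    exact conj_aut _ a)

private lemma theta_mk {G : Type*} [Group G] (φ : MulAut G) (c : G) :
    theta φ ⟨c, ofAdd 1⟩ = MulAut.conj c * φ := by
  simp [theta, SemidirectProduct.lift]

private lemma key {G : Type*} [Group G] (φ : MulAut G)
    (h : G ⋊[zpowersHom (MulAut G) φ] Multiplicative ℤ) (a : G) :
    h * inl a * h⁻¹ = inl (theta φ h a) := by
  ext <;> simp [theta, SemidirectProduct.lift, MulAut.conj_apply, MulAut.mul_apply, mul_assoc,
    ← map_zpow]

private lemma mkconj {G : Type*} [Group G] (φ : MulAut G) (c d : G) :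
    (⟨c, ofAdd 1⟩ : G ⋊[zpowersHom (MulAut G) φ] Multiplicative ℤ) * inl d
      * (⟨c, ofAdd 1⟩ : G ⋊[zpowersHom (MulAut G) φ] Multiplicative ℤ)⁻¹
      = inl (c * φ d * c⁻¹) := by
  rw [key φ _ d, theta_mk]
  simp [MulAut.mul_apply, MulAut.conj_apply]

/-- `φ₁` and `φ₂` are conjugate in `Out(G)` iff there is an isomorphism of the mapping tori
`G ⋊_{φ₁} ℤ ≃ G ⋊_{φ₂} ℤ` sending `G × {0}` onto `G × {0}` and `t₁ = (1,1)` into the coset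
`t₂ · (G × {0})`. -/
theorem stmt6 {G : Type*} [Group G] (φ₁ φ₂ : MulAut G) :
    (∃ (β : MulAut G) (x : G), β * φ₁ * β⁻¹ = MulAut.conj x * φ₂) ↔
    ∃ ι : (G ⋊[zpowersHom (MulAut G) φ₁] Multiplicative ℤ) ≃*
        (G ⋊[zpowersHom (MulAut G) φ₂] Multiplicative ℤ),
      Subgroup.map ι.toMonoidHom
          (SemidirectProduct.inl :
            G →* G ⋊[zpowersHom (MulAut G) φ₁] Multiplicative ℤ).range
        = (SemidirectProduct.inl :
            G →* G ⋊[zpowersHom (MulAut G) φ₂] Multiplicative ℤ).range ∧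
      ∃ g : G, ι ⟨1, Multiplicative.ofAdd (1 : ℤ)⟩ = ⟨g, Multiplicative.ofAdd (1 : ℤ)⟩ := by
  constructor
  · rintro ⟨β, x, hβ⟩
    set τ : G ⋊[zpowersHom (MulAut G) φ₂] Multiplicative ℤ := ⟨x, ofAdd 1⟩ with hτdef
    set σ : G ⋊[zpowersHom (MulAut G) φ₁] Multiplicative ℤ := ⟨β⁻¹ x⁻¹, ofAdd 1⟩ with hσdef
    have hτ : theta φ₂ τ = β * φ₁ * β⁻¹ := by rw [hτdef, theta_mk, hβ]
    have hσ : theta φ₁ σ = β⁻¹ * φ₂ * β := by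
      rw [hσdef, theta_mk]
      have h2 : φ₂ = MulAut.conj x⁻¹ * (β * φ₁ * β⁻¹) := by
        rw [hβ, map_inv]; group
      rw [h2, conj_aut β⁻¹ x⁻¹, inv_inv]
      group
    have compat₁ : ∀ n : Multiplicative ℤ,
        (inl.comp β.toMonoidHom).comp ((zpowersHom (MulAut G) φ₁) n).toMonoidHom
          = (MulAut.conj ((zpowersHom _ τ) n)).toMonoidHom.comp (inl.comp β.toMonoidHom) := by
      intro n
      refine MonoidHom.ext fun a => ?_
      simp only [MonoidHom.comp_apply, MulEquiv.coe_toMonoidHom, MulAut.conj_apply,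
        zpowersHom_apply]
      rw [key φ₂ (τ ^ toAdd n) (β a), map_zpow, hτ, conj_zpow]
      simp [MulAut.mul_apply]
    have compat₂ : ∀ n : Multiplicative ℤ,
        (inl.comp (β⁻¹ : MulAut G).toMonoidHom).comp ((zpowersHom (MulAut G) φ₂) n).toMonoidHom
          = (MulAut.conj ((zpowersHom _ σ) n)).toMonoidHom.comp
              (inl.comp (β⁻¹ : MulAut G).toMonoidHom) := by
      intro n
      refine MonoidHom.ext fun a => ?_
      simp only [MonoidHom.comp_apply, MulEquiv.coe_toMonoidHom, MulAut.conj_apply,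
        zpowersHom_apply]
      rw [key φ₁ (σ ^ toAdd n) ((β⁻¹ : MulAut G) a), map_zpow, hσ]
      rw [show (β⁻¹ * φ₂ * β : MulAut G) = β⁻¹ * φ₂ * (β⁻¹)⁻¹ by group, conj_zpow]
      simp [MulAut.mul_apply]
    set F : (G ⋊[zpowersHom (MulAut G) φ₁] Multiplicative ℤ) →*
        (G ⋊[zpowersHom (MulAut G) φ₂] Multiplicative ℤ) :=
      SemidirectProduct.lift (inl.comp β.toMonoidHom) (zpowersHom _ τ) compat₁ with hF
    set F' : (G ⋊[zpowersHom (MulAut G) φ₂] Multiplicative ℤ) →*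
        (G ⋊[zpowersHom (MulAut G) φ₁] Multiplicative ℤ) :=
      SemidirectProduct.lift (inl.comp (β⁻¹ : MulAut G).toMonoidHom) (zpowersHom _ σ) compat₂
        with hF'
    have hmk₁ : (⟨(1 : G), ofAdd 1⟩ : G ⋊[zpowersHom (MulAut G) φ₁] Multiplicative ℤ)
        = inr (ofAdd 1) := by ext <;> simp
    have h1 : F'.comp F = MonoidHom.id _ := by
      apply SemidirectProduct.hom_ext
      · refine MonoidHom.ext fun a => ?_
        simp [hF, hF', MulAut.apply_inv_self]
      · apply MonoidHom.ext_mint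
        simp only [MonoidHom.comp_apply, MonoidHom.id_apply, hF, hF', lift_inr,
          zpowersHom_apply, toAdd_ofAdd, zpow_one]
        rw [hτdef, mk_eq_inl_mul_inr, map_mul, lift_inl, lift_inr]
        simp only [MonoidHom.comp_apply, zpowersHom_apply, toAdd_ofAdd, zpow_one, hσdef]
        rw [mk_eq_inl_mul_inr, ← mul_assoc, ← map_mul]
        simp [← map_mul]
    have h2 : F.comp F' = MonoidHom.id _ := by
      apply SemidirectProduct.hom_ext
      · refine MonoidHom.ext fun a => ?_
        simp [hF, hF', MulAut.apply_inv_self]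
      · apply MonoidHom.ext_mint
        simp only [MonoidHom.comp_apply, MonoidHom.id_apply, hF, hF', lift_inr,
          zpowersHom_apply, toAdd_ofAdd, zpow_one]
        rw [hσdef, mk_eq_inl_mul_inr, map_mul, lift_inl, lift_inr]
        simp only [MonoidHom.comp_apply, zpowersHom_apply, toAdd_ofAdd, zpow_one, hτdef]
        rw [mk_eq_inl_mul_inr, ← mul_assoc, ← map_mul]
        simp [← map_mul, MulAut.apply_inv_self]
    refine ⟨MonoidHom.toMulEquiv F F' h1 h2, ?_, x, ?_⟩
    · ext y
      simp only [Subgroup.mem_map, MonoidHom.mem_range]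
      constructor
      · rintro ⟨-, ⟨a, rfl⟩, rfl⟩
        exact ⟨β a, by simp [MonoidHom.toMulEquiv, hF]⟩
      · rintro ⟨b, rfl⟩
        refine ⟨inl ((β⁻¹ : MulAut G) b), ⟨_, rfl⟩, ?_⟩
        simp [MonoidHom.toMulEquiv, hF, MulAut.apply_inv_self]
    · have : (MonoidHom.toMulEquiv F F' h1 h2) ⟨1, ofAdd 1⟩ = F ⟨1, ofAdd 1⟩ := rfl
      rw [this, hmk₁, hF, lift_inr]
      simp [hτdef]
  · rintro ⟨ι, hmap, g, hg⟩
    have hmem : ∀ a : G, ∃ b : G, inl b = ι (inl a) := by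
      intro a
      have : ι (inl a) ∈ (inl : G →* G ⋊[zpowersHom (MulAut G) φ₂] Multiplicative ℤ).range := by
        rw [← hmap]
        exact ⟨inl a, ⟨a, rfl⟩, rfl⟩
      exact this
    choose b hb using hmem
    have hbmul : ∀ a₁ a₂ : G, b (a₁ * a₂) = b a₁ * b a₂ := by
      intro a₁ a₂
      apply inl_injective (φ := zpowersHom (MulAut G) φ₂)
      rw [map_mul, hb, hb, hb, map_mul, map_mul]
    have hbinj : Function.Injective b := by
      intro a₁ a₂ h
      apply inl_injective (φ := zpowersHom (MulAut G) φ₁)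
      apply ι.injective
      rw [← hb, ← hb, h]
    have hbsurj : Function.Surjective b := by
      intro c
      have hc : inl c ∈ (inl : G →* G ⋊[zpowersHom (MulAut G) φ₂] Multiplicative ℤ).range :=
        ⟨c, rfl⟩
      rw [← hmap] at hc
      obtain ⟨y, ⟨a, rfl⟩, hy⟩ := hc
      exact ⟨a, inl_injective (φ := zpowersHom (MulAut G) φ₂) (by rw [hb]; exact hy)⟩
    set β : MulAut G := MulEquiv.ofBijective (MonoidHom.mk' b hbmul) ⟨hbinj, hbsurj⟩ with hβdef
    have hβ : ∀ a, β a = b a := fun a => rfl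
    refine ⟨β, g, ?_⟩
    have hkey2 : ∀ a : G, b (φ₁ a) = g * φ₂ (b a) * g⁻¹ := by
      intro a
      apply inl_injective (φ := zpowersHom (MulAut G) φ₂)
      have e1 : (inl (φ₁ a) : G ⋊[zpowersHom (MulAut G) φ₁] Multiplicative ℤ)
          = (⟨1, ofAdd 1⟩ : G ⋊[zpowersHom (MulAut G) φ₁] Multiplicative ℤ) * inl a
            * (⟨1, ofAdd 1⟩ : G ⋊[zpowersHom (MulAut G) φ₁] Multiplicative ℤ)⁻¹ := by
        rw [mkconj]; simp
      rw [hb (φ₁ a), e1, map_mul, map_mul, map_inv, hg, ← hb a, mkconj]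
    ext a
    simp only [MulAut.mul_apply, MulAut.conj_apply]
    have hba : b ((β⁻¹ : MulAut G) a) = a := (hβ _).symm.trans (MulAut.apply_inv_self G β a)
    calc β (φ₁ ((β⁻¹ : MulAut G) a)) = b (φ₁ ((β⁻¹ : MulAut G) a)) := hβ _
      _ = g * φ₂ (b ((β⁻¹ : MulAut G) a)) * g⁻¹ := hkey2 _
      _ = g * φ₂ a * g⁻¹ := by rw [hba]
end

section
/- Let G = A ∗ B be a free product with A and B nontrivial, and let φ be an automorphism of G preserving the subgroup A and preserving the conjugacy class of B. Then there exists b₀ ∈ G such that the automorphism ad_{b₀} ∘ φ preserves both A and B. -/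
/-!
Write `g = a w b` with `a ∈ A`, `b ∈ B` and `w` either trivial or a reduced word starting in `B`
and ending in `A`. Then `⟨A, gBg⁻¹⟩ = a⟨A, wBw⁻¹⟩a⁻¹`, and for `w ≠ 1` ping-pong on reduced words
shows that the reduced form of a nontrivial element of `⟨A, wBw⁻¹⟩` is never a single letter of
`B`; in particular the first letter of `w` is missing. Since `A = φ(A)` and `gBg⁻¹ = φ(B)` generate
`A ∗ B`, this forces `g = ab`, and `b₀ = a⁻¹` works.
-/

open scoped Pointwise

theorem Subgroup.mulAut_smul_top {G : Type*} [Group G] (σ : MulAut G) :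
    σ • (⊤ : Subgroup G) = ⊤ :=
  Subgroup.map_top_of_surjective _ σ.surjective

theorem Subgroup.map_mulAut_conj_smul {G H : Type*} [Group G] [Group H] (f : G →* H) (x : G)
    (K : Subgroup G) : (MulAut.conj x • K).map f = MulAut.conj (f x) • K.map f := by
  change (K.map (MulAut.conj x).toMonoidHom).map f = (K.map f).map (MulAut.conj (f x)).toMonoidHom
  rw [Subgroup.map_map, Subgroup.map_map]
  congr 1
  ext
  simp

namespace Monoid.CoprodI

namespace NeWord

variable {ι : Type*} {M : ι → Type*}

theorem head_ne_one [∀ i, Monoid (M i)] {i j : ι} (w : NeWord M i j) : w.head ≠ 1 := by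
  induction w with
  | singleton x hx => exact hx
  | append w₁ _ _ ih _ => exact ih

theorem prod_eq_of_or_exists_prod_mul_of [∀ i, Monoid (M i)] {i j : ι} (w : NeWord M i j) :
    (i = j ∧ ∃ x : M j, w.prod = of x) ∨
      ∃ (k : ι) (_ : k ≠ j) (w' : NeWord M i k) (x : M j), w.prod = w'.prod * of x := by
  induction w with
  | singleton x hx => exact Or.inl ⟨rfl, x, prod_singleton x hx⟩
  | append w₁ hne w₂ _ ih =>
    rcases ih with ⟨rfl, x, hx⟩ | ⟨k, hk, w', x, hx⟩
    · exact Or.inr ⟨_, hne, w₁, x, by rw [append_prod, hx]⟩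
    · exact Or.inr ⟨k, hk, w₁.append hne w', x, by rw [append_prod, append_prod, hx, mul_assoc]⟩

variable [∀ i, Monoid (M i)] [DecidableEq ι] [∀ i, DecidableEq (M i)]

theorem toList_prod_smul {i j : ι} (w : NeWord M i j) {u : Word M} (hu : u.fstIdx ≠ some j) :
    (w.prod • u).toList = w.toList ++ u.toList := by
  induction w generalizing u with
  | singleton x hx =>
    rw [prod_singleton, ← Word.cons_eq_smul (h1 := hu) (h2 := hx)]
    rfl
  | @append _ j k _ w₁ hne w₂ ih₁ ih₂ =>
    have hw₂ : (w₂.prod • u).fstIdx ≠ some j := by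
      simp [Word.fstIdx, ih₂ hu, List.head?_append, w₂.toList_head?, Ne.symm hne]
    rw [append_prod, mul_smul, ih₁ hw₂, ih₂ hu, toList, List.append_assoc]

theorem fstIdx_prod_smul {i j : ι} (w : NeWord M i j) {u : Word M} (hu : u.fstIdx ≠ some j) :
    (w.prod • u).fstIdx = some i := by
  simp [Word.fstIdx, w.toList_prod_smul hu, List.head?_append, w.toList_head?]

theorem exists_prod_eq_of_ne_one {g : CoprodI M} (hg : g ≠ 1) :
    ∃ (i j : ι) (w : NeWord M i j), w.prod = g := by
  have hne : Word.equiv g ≠ Word.empty := fun h => hg (by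
    rw [← Word.equiv.symm_apply_apply g, h]; rfl)
  obtain ⟨i, j, w, hw⟩ := of_word _ hne
  exact ⟨i, j, w, by rw [prod, hw]; exact Word.equiv.symm_apply_apply g⟩

end NeWord

section Bool

variable {M : Bool → Type*} [∀ i, Group (M i)]

def ofConj (g : CoprodI M) : ∀ i, M i →* CoprodI M
  | true => of
  | false => (MulAut.conj g).toMonoidHom.comp of

theorem range_lift_ofConj (g : CoprodI M) :
    (lift (ofConj g)).range
      = (of : M true →* _).range ⊔ MulAut.conj g • (of : M false →* _).range := by
  rw [range_eq_iSup, iSup_bool_eq]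
  exact congrArg₂ _ rfl (MonoidHom.range_comp _ _)

variable [∀ i, DecidableEq (M i)]

theorem exists_eq_of_mul_of_or_eq_of_mul_neWord_prod_mul_of (g : CoprodI M) :
    ∃ (a : M true) (b : M false),
      g = of a * of b ∨ ∃ w : NeWord M false true, g = of a * w.prod * of b := by
  set p := Word.equivPair true (Word.equiv g)
  have hg : g = of p.head * p.tail.prod := by
    rw [← Word.prod_smul, Word.equivPair_head_smul_equivPair_tail]
    exact (Word.equiv.symm_apply_apply g).symm
  refine ⟨p.head, ?_⟩
  by_cases ht : p.tail = Word.empty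
  · exact ⟨1, Or.inl (by rw [hg, ht, map_one, mul_one]; rfl)⟩
  obtain ⟨i, j, w, hw⟩ := NeWord.of_word _ ht
  have hfst := p.fstIdx_ne
  rw [← hw] at hg hfst
  obtain rfl : i = false := by
    simpa [Word.fstIdx, NeWord.toWord, w.toList_head?] using hfst
  cases j with
  | true => exact ⟨1, Or.inr ⟨w, by rw [hg, map_one, mul_one]; rfl⟩⟩
  | false =>
    rcases w.prod_eq_of_or_exists_prod_mul_of with ⟨-, x, hx⟩ | ⟨k, hk, w', x, hx⟩
    · exact ⟨x, Or.inl (by rw [hg, ← NeWord.prod, hx])⟩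
    · obtain rfl : k = true := by simpa using hk
      exact ⟨x, Or.inr ⟨w', by rw [hg, ← NeWord.prod, hx, mul_assoc]⟩⟩

variable (M) in
/-- A single letter of `M false` lies in neither set. -/
def pingPongSet : Bool → Set (Word M)
  | true => {u | u.fstIdx ≠ some false}
  | false => {u | u.fstIdx ≠ some true ∧ u.toList.length ≠ 1}

theorem ofConj_smul_pingPongSet_subset (w : NeWord M false true) :
    Pairwise fun i j =>
      ∀ h : M i, h ≠ 1 → ofConj w.prod i h • pingPongSet M j ⊆ pingPongSet M i := by
  rintro (_ | _) (_ | _) hij h hh <;> simp only [ne_eq, not_true_eq_false] at hij <;>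
    rintro _ ⟨u, hu, rfl⟩
  · let W := (w.append (by simp) (NeWord.singleton (M := M) h hh)).append (by simp) w.inv
    have hW : ofConj w.prod false h = W.prod := by
      simp [W, ofConj, NeWord.append_prod, NeWord.inv_prod]
    have hlen : (W.prod • u).toList.length ≠ 1 := by
      have := List.length_pos_of_ne_nil w.toList_ne_nil
      rw [W.toList_prod_smul hu]
      simp [W, NeWord.toList]
      omega
    rw [hW]
    exact ⟨by rw [W.fstIdx_prod_smul hu]; simp, hlen⟩
  · change (of h • u).fstIdx ≠ some false
    rw [← Word.cons_eq_smul (h1 := hu.1) (h2 := hh), Word.fstIdx_cons]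
    simp

theorem sup_conj_neWord_prod_ne_top (w : NeWord M false true) :
    (of : M true →* _).range ⊔ MulAut.conj w.prod • (of : M false →* _).range ≠ ⊤ := by
  intro htop
  obtain ⟨y, hy⟩ : of w.head ∈ (lift (ofConj w.prod)).range := by
    rw [range_lift_ofConj, htop]; trivial
  have hy1 : y ≠ 1 := by
    rintro rfl
    exact w.head_ne_one (of_injective false (by rw [← hy, map_one, map_one]))
  obtain ⟨i, j, v, rfl⟩ := NeWord.exists_prod_eq_of_ne_one hy1
  have hmem : lift (ofConj w.prod) v.prod • Word.empty ∈ pingPongSet M i :=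
    lift_word_ping_pong (ofConj w.prod) (pingPongSet M) (ofConj_smul_pingPongSet_subset w) v
      (k := !j) (by simp) ⟨Word.empty, by cases j <;> simp [pingPongSet, Word.fstIdx], rfl⟩
  rw [hy, ← Word.cons_eq_smul (h1 := by simp [Word.fstIdx]) (h2 := w.head_ne_one)] at hmem
  cases i <;> simp [pingPongSet, Word.fstIdx_cons] at hmem

theorem exists_eq_of_mul_of_of_sup_conj_eq_top {g : CoprodI M}
    (h : (of : M true →* _).range ⊔ MulAut.conj g • (of : M false →* _).range = ⊤) :
    ∃ (a : M true) (b : M false), g = of a * of b := by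
  obtain ⟨a, b, hg | ⟨w, rfl⟩⟩ := exists_eq_of_mul_of_or_eq_of_mul_neWord_prod_mul_of g
  · exact ⟨a, b, hg⟩
  refine absurd ?_ (sup_conj_neWord_prod_ne_top w)
  have hA : MulAut.conj (of a) • (of : M true →* _).range = _ :=
    Subgroup.conj_smul_eq_self_of_mem ⟨a, rfl⟩
  have hB : MulAut.conj (of b) • (of : M false →* _).range = _ :=
    Subgroup.conj_smul_eq_self_of_mem ⟨b, rfl⟩
  rw [map_mul, map_mul, mul_smul, mul_smul, hB, ← hA, ← Subgroup.smul_sup,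
    smul_eq_iff_eq_inv_smul, Subgroup.mulAut_smul_top] at h
  exact h

end Bool

end Monoid.CoprodI

universe u v

namespace Monoid.Coprod

variable (A : Type u) (B : Type v)

/-- `CoprodI` needs all factors in one universe. -/
abbrev factors : Bool → Type max u v
  | true => ULift A
  | false => ULift B

variable [Group A] [Group B]

instance : ∀ i, Group (factors A B i)
  | true => inferInstanceAs (Group (ULift A))
  | false => inferInstanceAs (Group (ULift B))

def coprodIEquiv : CoprodI (factors A B) ≃* Coprod A B :=
  MonoidHom.toMulEquiv
    (CoprodI.lift fun
      | true => inl.comp MulEquiv.ulift.toMonoidHom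
      | false => inr.comp MulEquiv.ulift.toMonoidHom)
    (lift ((CoprodI.of (i := true)).comp (MulEquiv.ulift.symm : A ≃* ULift A).toMonoidHom)
      ((CoprodI.of (i := false)).comp (MulEquiv.ulift.symm : B ≃* ULift B).toMonoidHom))
    (CoprodI.ext_hom _ _ fun
      | true => MonoidHom.ext fun _ => rfl
      | false => MonoidHom.ext fun _ => rfl)
    (hom_ext (MonoidHom.ext fun _ => rfl) (MonoidHom.ext fun _ => rfl))

variable {A B}

theorem map_coprodIEquiv_range_of_true :
    (CoprodI.of : factors A B true →* _).range.map (coprodIEquiv A B).toMonoidHom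
      = (inl : A →* Coprod A B).range := by
  rw [MonoidHom.map_range]
  change ((inl : A →* Coprod A B).comp (MulEquiv.ulift : ULift A ≃* A).toMonoidHom).range = _
  rw [MonoidHom.range_comp, MonoidHom.range_eq_top.mpr MulEquiv.ulift.surjective,
    ← MonoidHom.range_eq_map]

theorem map_coprodIEquiv_range_of_false :
    (CoprodI.of : factors A B false →* _).range.map (coprodIEquiv A B).toMonoidHom
      = (inr : B →* Coprod A B).range := by
  rw [MonoidHom.map_range]
  change ((inr : B →* Coprod A B).comp (MulEquiv.ulift : ULift B ≃* B).toMonoidHom).range = _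
  rw [MonoidHom.range_comp, MonoidHom.range_eq_top.mpr MulEquiv.ulift.surjective,
    ← MonoidHom.range_eq_map]

theorem exists_eq_inl_mul_inr_of_sup_conj_eq_top {g : Coprod A B}
    (h : (inl : A →* Coprod A B).range ⊔ MulAut.conj g • (inr : B →* Coprod A B).range = ⊤) :
    ∃ a b, g = inl a * inr b := by
  classical
  set e := coprodIEquiv A B
  obtain ⟨x, rfl⟩ := e.surjective g
  rw [← map_coprodIEquiv_range_of_true, ← map_coprodIEquiv_range_of_false,
    ← MulEquiv.coe_toMonoidHom, ← Subgroup.map_mulAut_conj_smul, ← Subgroup.map_sup,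
    ← Subgroup.map_top_of_surjective e.toMonoidHom e.surjective] at h
  obtain ⟨a, b, rfl⟩ := CoprodI.exists_eq_of_mul_of_of_sup_conj_eq_top
    (Subgroup.map_injective e.injective h)
  exact ⟨a.down, b.down, map_mul e _ _⟩

end Monoid.Coprod

theorem stmt17_general {A B : Type*} [Group A] [Group B]
    (φ : MulAut (Monoid.Coprod A B))
    (hA : Subgroup.map φ.toMonoidHom (Monoid.Coprod.inl : A →* Monoid.Coprod A B).range
      = (Monoid.Coprod.inl : A →* Monoid.Coprod A B).range)
    (hB : ∃ g : Monoid.Coprod A B,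
      Subgroup.map φ.toMonoidHom (Monoid.Coprod.inr : B →* Monoid.Coprod A B).range
        = Subgroup.map (MulAut.conj g).toMonoidHom
            (Monoid.Coprod.inr : B →* Monoid.Coprod A B).range) :
    ∃ b₀ : Monoid.Coprod A B,
      Subgroup.map (MulAut.conj b₀ * φ : MulAut (Monoid.Coprod A B)).toMonoidHom
          (Monoid.Coprod.inl : A →* Monoid.Coprod A B).range
        = (Monoid.Coprod.inl : A →* Monoid.Coprod A B).range ∧
      Subgroup.map (MulAut.conj b₀ * φ : MulAut (Monoid.Coprod A B)).toMonoidHom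
          (Monoid.Coprod.inr : B →* Monoid.Coprod A B).range
        = (Monoid.Coprod.inr : B →* Monoid.Coprod A B).range := by
  obtain ⟨g, hg⟩ := hB
  set Aₛ := (Monoid.Coprod.inl : A →* Monoid.Coprod A B).range
  set Bₛ := (Monoid.Coprod.inr : B →* Monoid.Coprod A B).range
  change φ • Aₛ = Aₛ at hA
  change φ • Bₛ = MulAut.conj g • Bₛ at hg
  change ∃ b₀, (MulAut.conj b₀ * φ) • Aₛ = Aₛ ∧ (MulAut.conj b₀ * φ) • Bₛ = Bₛ
  have htop : Aₛ ⊔ MulAut.conj g • Bₛ = ⊤ := by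
    rw [← hA, ← hg, ← Subgroup.smul_sup, Monoid.Coprod.range_inl_sup_range_inr,
      Subgroup.mulAut_smul_top]
  obtain ⟨a, b, rfl⟩ := Monoid.Coprod.exists_eq_inl_mul_inr_of_sup_conj_eq_top htop
  refine ⟨(Monoid.Coprod.inl a)⁻¹, ?_, ?_⟩
  · rw [mul_smul, hA, Subgroup.conj_smul_eq_self_of_mem (H := Aₛ) (inv_mem ⟨a, rfl⟩)]
  · rw [mul_smul, hg, ← mul_smul, ← map_mul, inv_mul_cancel_left,
      Subgroup.conj_smul_eq_self_of_mem (H := Bₛ) ⟨b, rfl⟩]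

/-- If an automorphism of a free product `A ∗ B` preserves the factor `A` and preserves the
conjugacy class of the factor `B`, then after composing with an inner automorphism it
preserves both factors. -/
theorem stmt17 {A B : Type*} [Group A] [Group B] [Nontrivial A] [Nontrivial B]
    (φ : MulAut (Monoid.Coprod A B))
    (hA : Subgroup.map φ.toMonoidHom (Monoid.Coprod.inl : A →* Monoid.Coprod A B).range
      = (Monoid.Coprod.inl : A →* Monoid.Coprod A B).range)
    (hB : ∃ g : Monoid.Coprod A B,
      Subgroup.map φ.toMonoidHom (Monoid.Coprod.inr : B →* Monoid.Coprod A B).range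
        = Subgroup.map (MulAut.conj g).toMonoidHom
            (Monoid.Coprod.inr : B →* Monoid.Coprod A B).range) :
    ∃ b₀ : Monoid.Coprod A B,
      Subgroup.map (MulAut.conj b₀ * φ : MulAut (Monoid.Coprod A B)).toMonoidHom
          (Monoid.Coprod.inl : A →* Monoid.Coprod A B).range
        = (Monoid.Coprod.inl : A →* Monoid.Coprod A B).range ∧
      Subgroup.map (MulAut.conj b₀ * φ : MulAut (Monoid.Coprod A B)).toMonoidHom
          (Monoid.Coprod.inr : B →* Monoid.Coprod A B).range
        = (Monoid.Coprod.inr : B →* Monoid.Coprod A B).range :=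
  stmt17_general φ hA hB
end
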